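/- arXiv:1810.05959 — 2 statements merged into one kernel-verified Lean document; each statement's English description precedes it below -/
import Mathlib

section
/- If F : [0,1] → ℝ is continuous and not concave on [0,1], then there exist a natural number M ≥ 1 and integers 0 ≤ K1 < K2 < M such that F((K2+1)/M) − F(K2/M) > F((K1+1)/M) − F(K1/M). Consequently, the set function f(S) = F(|S ∩ N|/M) on a ground set containing a set N of size M fails to be submodular. -/
/-!
If all the grid increments `F ((k + 1) / M) - F (k / M)` are nonincreasing in `k`, then the
restriction of `F` to every grid `{k / M}` satisfies the three-slope inequality of a concave
function. Rounding arbitrary points `x ≤ y ≤ z` of `[0, 1]` down to the grid and letting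
`M → ∞`, continuity transfers the inequality to all of `[0, 1]`, so `F` would be concave.
A pair of increasing increments is realised by a set function `S ↦ F (#(S ∩ N) / M)` by taking
`S ⊆ T ⊆ N` of sizes `K1`, `K2` and a further point `u ∈ N \ T`.
-/

open Finset Filter Topology

lemma mul_le_sub_of_le_sub_succ (g : ℕ → ℝ) (d : ℝ) {a b : ℕ} (hab : a ≤ b)
    (h : ∀ i, a ≤ i → i < b → d ≤ g (i + 1) - g i) :
    ((b : ℝ) - a) * d ≤ g b - g a := by
  induction b, hab using Nat.le_induction with
  | base => simp
  | succ b hab ih =>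
    have hlast := h b hab (Nat.lt_succ_self b)
    have := ih fun i hai hib => h i hai (hib.trans (Nat.lt_succ_self b))
    push_cast
    linarith

lemma sub_le_mul_of_sub_succ_le (g : ℕ → ℝ) (d : ℝ) {a b : ℕ} (hab : a ≤ b)
    (h : ∀ i, a ≤ i → i < b → g (i + 1) - g i ≤ d) :
    g b - g a ≤ ((b : ℝ) - a) * d := by
  have := mul_le_sub_of_le_sub_succ (fun k => -g k) (-d) hab
    fun i hai hib => by linarith [h i hai hib]
  linarith

lemma mul_sub_le_mul_sub_of_sub_succ_antitone (g : ℕ → ℝ) (M : ℕ)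
    (hg : ∀ k₁ k₂, k₁ < k₂ → k₂ < M → g (k₂ + 1) - g k₂ ≤ g (k₁ + 1) - g k₁)
    {a b c : ℕ} (hab : a ≤ b) (hbc : b ≤ c) (hcM : c ≤ M) :
    ((b : ℝ) - a) * (g c - g b) ≤ ((c : ℝ) - b) * (g b - g a) := by
  rcases hbc.eq_or_lt with rfl | hbc'
  · simp
  set d := g (b + 1) - g b
  have hleft : ((b : ℝ) - a) * d ≤ g b - g a :=
    mul_le_sub_of_le_sub_succ g d hab fun i _ hib => hg i b hib (by omega)
  have hright : g c - g b ≤ ((c : ℝ) - b) * d :=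
    sub_le_mul_of_sub_succ_le g d hbc fun i hbi hic => by
      rcases hbi.eq_or_lt with rfl | hbi'
      · exact le_rfl
      · exact hg b i hbi' (by omega)
  have hba : (0 : ℝ) ≤ (b : ℝ) - a := sub_nonneg.2 (by exact_mod_cast hab)
  have hcb : (0 : ℝ) ≤ (c : ℝ) - b := sub_nonneg.2 (by exact_mod_cast hbc)
  calc ((b : ℝ) - a) * (g c - g b) ≤ ((b : ℝ) - a) * (((c : ℝ) - b) * d) :=
        mul_le_mul_of_nonneg_left hright hba
    _ = ((c : ℝ) - b) * (((b : ℝ) - a) * d) := by ring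
    _ ≤ ((c : ℝ) - b) * (g b - g a) := mul_le_mul_of_nonneg_left hleft hcb

lemma floor_mul_div_mem_Icc {w : ℝ} (hw : w ∈ Set.Icc (0 : ℝ) 1) (M : ℕ) :
    (⌊w * M⌋₊ : ℝ) / M ∈ Set.Icc (0 : ℝ) 1 := by
  refine ⟨by positivity, div_le_one_of_le₀ ?_ M.cast_nonneg⟩
  calc (⌊w * M⌋₊ : ℝ) ≤ w * M := Nat.floor_le (by have := hw.1; positivity)
    _ ≤ M := mul_le_of_le_one_left M.cast_nonneg hw.2

lemma floor_mul_le_natCast {w : ℝ} (hw : w ≤ 1) (M : ℕ) : ⌊w * M⌋₊ ≤ M :=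
  Nat.floor_le_of_le (mul_le_of_le_one_left M.cast_nonneg hw)

lemma tendsto_floor_mul_div_natCast {w : ℝ} (hw : 0 ≤ w) :
    Tendsto (fun M : ℕ => (⌊w * M⌋₊ : ℝ) / M) atTop (𝓝 w) :=
  (tendsto_nat_floor_mul_div_atTop hw).comp tendsto_natCast_atTop_atTop

lemma ContinuousOn.tendsto_comp_floor_mul_div {F : ℝ → ℝ}
    (hcont : ContinuousOn F (Set.Icc (0 : ℝ) 1)) {w : ℝ} (hw : w ∈ Set.Icc (0 : ℝ) 1) :
    Tendsto (fun M : ℕ => F ((⌊w * M⌋₊ : ℝ) / M)) atTop (𝓝 (F w)) :=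
  (hcont w hw).tendsto.comp <| tendsto_nhdsWithin_of_tendsto_nhds_of_eventually_within _
    (tendsto_floor_mul_div_natCast hw.1) (Eventually.of_forall (floor_mul_div_mem_Icc hw))

lemma mul_sub_le_mul_sub_of_grid_increments_antitone {F : ℝ → ℝ}
    (hcont : ContinuousOn F (Set.Icc (0 : ℝ) 1))
    (H : ∀ M K1 K2 : ℕ, 1 ≤ M → K1 < K2 → K2 < M →
      F ((K2 + 1 : ℝ) / M) - F ((K2 : ℝ) / M) ≤ F ((K1 + 1 : ℝ) / M) - F ((K1 : ℝ) / M))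
    {x y z : ℝ} (hx : x ∈ Set.Icc (0 : ℝ) 1) (hz : z ∈ Set.Icc (0 : ℝ) 1)
    (hxy : x ≤ y) (hyz : y ≤ z) :
    (y - x) * (F z - F y) ≤ (z - y) * (F y - F x) := by
  have hy : y ∈ Set.Icc (0 : ℝ) 1 := ⟨hx.1.trans hxy, hyz.trans hz.2⟩
  set r : ℝ → ℕ → ℝ := fun w M => (⌊w * M⌋₊ : ℝ) / M
  have hr : ∀ {w}, w ∈ Set.Icc (0 : ℝ) 1 → Tendsto (r w) atTop (𝓝 w) := fun hw =>
    tendsto_floor_mul_div_natCast hw.1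
  have hFr : ∀ {w}, w ∈ Set.Icc (0 : ℝ) 1 → Tendsto (fun M => F (r w M)) atTop (𝓝 (F w)) :=
    fun hw => hcont.tendsto_comp_floor_mul_div hw
  refine le_of_tendsto_of_tendsto (((hr hy).sub (hr hx)).mul ((hFr hz).sub (hFr hy)))
    (((hr hz).sub (hr hy)).mul ((hFr hy).sub (hFr hx))) ?_
  filter_upwards [eventually_ge_atTop 1] with M hM
  have hgrid := mul_sub_le_mul_sub_of_sub_succ_antitone (fun k => F ((k : ℝ) / M)) M
    (fun k₁ k₂ h₁₂ h₂ => by simpa only [Nat.cast_succ] using H M k₁ k₂ hM h₁₂ h₂)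
    (a := ⌊x * M⌋₊) (b := ⌊y * M⌋₊) (c := ⌊z * M⌋₊)
    (Nat.floor_le_floor (by gcongr)) (Nat.floor_le_floor (by gcongr))
    (floor_mul_le_natCast hz.2 M)
  convert mul_le_mul_of_nonneg_left hgrid (by positivity : (0 : ℝ) ≤ (M : ℝ)⁻¹) using 1 <;>
    simp only [r] <;> ring

lemma concaveOn_Icc_of_grid_increments_antitone {F : ℝ → ℝ}
    (hcont : ContinuousOn F (Set.Icc (0 : ℝ) 1))
    (H : ∀ M K1 K2 : ℕ, 1 ≤ M → K1 < K2 → K2 < M →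
      F ((K2 + 1 : ℝ) / M) - F ((K2 : ℝ) / M) ≤ F ((K1 + 1 : ℝ) / M) - F ((K1 : ℝ) / M)) :
    ConcaveOn ℝ (Set.Icc (0 : ℝ) 1) F := by
  refine concaveOn_of_slope_anti_adjacent (convex_Icc 0 1) fun hx hz hxy hyz => ?_
  rw [div_le_div_iff₀ (sub_pos.2 hyz) (sub_pos.2 hxy)]
  linarith [mul_sub_le_mul_sub_of_grid_increments_antitone hcont H hx hz hxy.le hyz.le]

lemma Finset.exists_subset_subset_insert_card_inter {V : Type*} [DecidableEq V]
    (N : Finset V) {K1 K2 : ℕ} (h12 : K1 ≤ K2) (h2 : K2 < #N) :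
    ∃ (S T : Finset V) (u : V), S ⊆ T ∧ u ∉ T ∧
      #(insert u T ∩ N) = K2 + 1 ∧ #(T ∩ N) = K2 ∧
      #(insert u S ∩ N) = K1 + 1 ∧ #(S ∩ N) = K1 := by
  obtain ⟨T, hTN, hT⟩ := exists_subset_card_eq h2.le
  obtain ⟨S, hST, hS⟩ := exists_subset_card_eq (hT ▸ h12 : K1 ≤ #T)
  obtain ⟨u, huN, huT⟩ : ∃ u ∈ N, u ∉ T := exists_of_ssubset (ssubset_of_subset_of_ne hTN
    fun h => by subst h; omega)
  have huS : u ∉ S := fun h => huT (hST h)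
  refine ⟨S, T, u, hST, huT, ?_, ?_, ?_, ?_⟩
  · rw [inter_eq_left.2 (insert_subset huN hTN), card_insert_of_notMem huT, hT]
  · rw [inter_eq_left.2 hTN, hT]
  · rw [inter_eq_left.2 (insert_subset huN (hST.trans hTN)), card_insert_of_notMem huS, hS]
  · rw [inter_eq_left.2 (hST.trans hTN), hS]

theorem stmt_2 (F : ℝ → ℝ) (hcont : ContinuousOn F (Set.Icc (0:ℝ) 1))
    (hnc : ¬ ConcaveOn ℝ (Set.Icc (0:ℝ) 1) F) :
    ∃ M K1 K2 : ℕ, 1 ≤ M ∧ K1 < K2 ∧ K2 < M ∧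
      F ((K2 + 1 : ℝ) / M) - F ((K2 : ℝ) / M) >
        F ((K1 + 1 : ℝ) / M) - F ((K1 : ℝ) / M) ∧
      -- consequently, f(S) = F(|S ∩ N|/M) on a ground set containing a set N
      -- of size M fails to be submodular
      (∀ (V : Type) [Fintype V] [DecidableEq V] (N : Finset V), N.card = M →
        ∃ (S T : Finset V) (u : V), S ⊆ T ∧ u ∉ T ∧
          F (((insert u T ∩ N).card : ℝ) / M) - F (((T ∩ N).card : ℝ) / M) >
            F (((insert u S ∩ N).card : ℝ) / M) - F (((S ∩ N).card : ℝ) / M)) := by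
  obtain ⟨M, K1, K2, hM, h12, h2M, hgap⟩ : ∃ M K1 K2 : ℕ, 1 ≤ M ∧ K1 < K2 ∧ K2 < M ∧
      F ((K2 + 1 : ℝ) / M) - F ((K2 : ℝ) / M) >
        F ((K1 + 1 : ℝ) / M) - F ((K1 : ℝ) / M) := by
    by_contra! H
    exact hnc (concaveOn_Icc_of_grid_increments_antitone hcont H)
  refine ⟨M, K1, K2, hM, h12, h2M, hgap, fun V _ _ N hN => ?_⟩
  obtain ⟨S, T, u, hST, huT, hTu, hT, hSu, hS⟩ :=
    N.exists_subset_subset_insert_card_inter h12.le (hN ▸ h2M)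
  refine ⟨S, T, u, hST, huT, ?_⟩
  rw [hTu, hT, hSu, hS]
  push_cast
  exact hgap
end

section
/- Let σ : 2^V → ℝ≥0 be monotone and submodular with σ(∅) ≥ 0, and let S be the set produced by the greedy algorithm that for k iterations adds the element with maximum marginal gain. Then σ(S) ≥ (1 − 1/e) · max_{|T| ≤ k} σ(T). -/
open Finset

/-!
Let `g i = σ T - σ (S i)` be the gap between the greedy set after `i` steps and a competitor `T`
with `|T| ≤ k`. By submodularity, adding all of `T` to `S i` gains at most the sum of the
individual marginal gains, each at most the greedy gain, so `g i ≤ k (g i - g (i+1))`,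
i.e. `g (i+1) ≤ (1 - 1/k) g i`. Hence `g k ≤ (1 - 1/k)^k g 0 ≤ e⁻¹ σ T`.
-/

section Submodular

variable {V : Type*} [DecidableEq V]

def marginalGain (σ : Finset V → ℝ) (A : Finset V) (u : V) : ℝ :=
  σ (insert u A) - σ A

def IsSubmodular (σ : Finset V → ℝ) : Prop :=
  ∀ S T : Finset V, S ⊆ T → ∀ u ∉ T, marginalGain σ T u ≤ marginalGain σ S u

variable {σ : Finset V → ℝ}

theorem IsSubmodular.le_add_sum_marginalGain (hsub : IsSubmodular σ) (A T : Finset V) :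
    σ (A ∪ T) ≤ σ A + ∑ u ∈ T, marginalGain σ A u := by
  induction T using Finset.induction_on with
  | empty => simp
  | @insert t T ht ih =>
    rw [union_insert, sum_insert ht]
    by_cases htA : t ∈ A ∪ T
    · have htA' : t ∈ A := (mem_union.mp htA).resolve_right ht
      rw [insert_eq_of_mem htA, marginalGain, insert_eq_of_mem htA']
      linarith
    · have := hsub A (A ∪ T) subset_union_left t htA
      rw [marginalGain, marginalGain] at this
      rw [marginalGain]
      linarith

theorem IsSubmodular.sub_le_card_mul (hmono : Monotone σ) (hsub : IsSubmodular σ)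
    {A T : Finset V} {δ : ℝ} (hδ : ∀ v, marginalGain σ A v ≤ δ) :
    σ T - σ A ≤ #T * δ := by
  have hsum : ∑ u ∈ T, marginalGain σ A u ≤ #T * δ := by
    simpa using sum_le_card_nsmul T _ δ fun v _ => hδ v
  have := hsub.le_add_sum_marginalGain A T
  have := hmono (subset_union_right : T ⊆ A ∪ T)
  linarith

theorem IsSubmodular.greedy_step_gap_le (hmono : Monotone σ) (hsub : IsSubmodular σ)
    {k : ℕ} (hk : 0 < k) {A T : Finset V} (hT : #T ≤ k) {u : V}
    (hu : ∀ v, marginalGain σ A v ≤ marginalGain σ A u) :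
    σ T - σ (insert u A) ≤ (1 - 1 / k) * (σ T - σ A) := by
  have hk' : (0 : ℝ) < k := by exact_mod_cast hk
  have hgain : 0 ≤ marginalGain σ A u := sub_nonneg.mpr (hmono (subset_insert u A))
  have hcard : σ T - σ A ≤ k * marginalGain σ A u :=
    (hsub.sub_le_card_mul hmono hu).trans
      (mul_le_mul_of_nonneg_right (by exact_mod_cast hT) hgain)
  have hdiv : (σ T - σ A) / k ≤ marginalGain σ A u := by
    rw [div_le_iff₀ hk']; linarith
  unfold marginalGain at hdiv
  calc σ T - σ (insert u A) = σ T - σ A - (σ (insert u A) - σ A) := by ring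
    _ ≤ σ T - σ A - (σ T - σ A) / k := by linarith
    _ = (1 - 1 / k) * (σ T - σ A) := by ring

end Submodular

theorem stmt_12_general {V : Type*} [DecidableEq V]
    (σ : Finset V → ℝ)
    (hnonneg : ∀ S : Finset V, 0 ≤ σ S)
    (hmono : ∀ S T : Finset V, S ⊆ T → σ S ≤ σ T)
    (hsub : ∀ S T : Finset V, S ⊆ T → ∀ u ∉ T,
      σ (insert u T) - σ T ≤ σ (insert u S) - σ S)
    (k : ℕ) (S : ℕ → Finset V) (hS0 : S 0 = ∅)
    (hgreedy : ∀ i < k, ∃ u : V, S (i + 1) = insert u (S i) ∧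
      ∀ v : V, σ (insert v (S i)) - σ (S i) ≤ σ (insert u (S i)) - σ (S i)) :
    ∀ T : Finset V, T.card ≤ k → σ (S k) ≥ (1 - 1 / Real.exp 1) * σ T := by
  intro T hT
  have hσ0 := hnonneg ∅
  have he : 0 < 1 / Real.exp 1 := by positivity
  obtain rfl | hk := Nat.eq_zero_or_pos k
  · obtain rfl := card_eq_zero.mp (Nat.le_zero.mp hT)
    rw [hS0]
    nlinarith
  have hc : (0 : ℝ) ≤ 1 - 1 / k := by
    rw [sub_nonneg, div_le_one (by exact_mod_cast hk)]; exact_mod_cast hk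
  have hgap : ∀ i < k, σ T - σ (S (i + 1)) ≤ (1 - 1 / k) * (σ T - σ (S i)) := by
    intro i hi
    obtain ⟨u, hSu, hu⟩ := hgreedy i hi
    rw [hSu]
    exact IsSubmodular.greedy_step_gap_le hmono hsub hk hT hu
  have hgeom := le_geom (u := fun i => σ T - σ (S i)) hc k hgap
  have hpow : (1 - 1 / k : ℝ) ^ k ≤ 1 / Real.exp 1 := by
    simpa [Real.exp_neg] using Real.one_sub_div_pow_le_exp_neg (t := 1) (by exact_mod_cast hk)
  have hT0 : 0 ≤ σ T - σ (S 0) := sub_nonneg.mpr (hmono _ _ (by simp [hS0]))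
  rw [hS0] at hgeom hT0
  have := mul_le_mul_of_nonneg_right hpow hT0
  have := mul_le_mul_of_nonneg_left (sub_le_self (σ T) hσ0) he.le
  linarith

theorem stmt_12 {V : Type*} [Fintype V] [DecidableEq V] [Nonempty V]
    (σ : Finset V → ℝ)
    (hnonneg : ∀ S : Finset V, 0 ≤ σ S)
    (hmono : ∀ S T : Finset V, S ⊆ T → σ S ≤ σ T)
    (hsub : ∀ S T : Finset V, S ⊆ T → ∀ u ∉ T,
      σ (insert u T) - σ T ≤ σ (insert u S) - σ S)
    (k : ℕ) (S : ℕ → Finset V) (hS0 : S 0 = ∅)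
    (hgreedy : ∀ i < k, ∃ u : V, S (i + 1) = insert u (S i) ∧
      ∀ v : V, σ (insert v (S i)) - σ (S i) ≤ σ (insert u (S i)) - σ (S i)) :
    ∀ T : Finset V, T.card ≤ k → σ (S k) ≥ (1 - 1 / Real.exp 1) * σ T :=
  stmt_12_general σ hnonneg hmono hsub k S hS0 hgreedy
end
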